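/- Let f : I ⊆ ℝ → ℝ be twice differentiable on the interior I° of I, with a, b ∈ I°, a < b, and f'' Lebesgue integrable on [a,b]. Let q > 1 and p > 1 with 1/p + 1/q = 1. If |f''|^q is quasi-convex on [a,b], then |(1/(b-a)) ∫_a^b f(x) dx − f((a+b)/2)| ≤ ((b-a)²/(8·(2p+1)^{1/p})) · (sup{|f''(a)|^q, |f''(b)|^q})^{1/q}. -/

import Mathlib

/-!
Quasi-convexity of `|f''|^q` on `[a, b]` bounds `|f''|` there by
`K = max (|f'' a|^q, |f'' b|^q)^(1/q)`. Integrating by parts twice against the Peano kernel of the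
midpoint rule, `(x - a)² / 2` on `[a, m]` and `(b - x)² / 2` on `[m, b]` with `m = (a + b) / 2`,
gives the classical midpoint error bound `K (b - a)² / 24`. This is sharper than the claimed
bound, because `(2p + 1)^(1/p) ≤ 3` for `p ≥ 1` by Bernoulli's inequality.
-/

open MeasureTheory Set intervalIntegral
open scoped Interval

theorem QuasiconvexOn.le_max_of_mem_Icc {β : Type*} [LinearOrder β] {g : ℝ → β} {a b x : ℝ}
    (hg : QuasiconvexOn ℝ (Icc a b) g) (hx : x ∈ Icc a b) : g x ≤ max (g a) (g b) :=
  ((hg _).ordConnected.out ⟨left_mem_Icc.2 (hx.1.trans hx.2), le_max_left _ _⟩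
    ⟨right_mem_Icc.2 (hx.1.trans hx.2), le_max_right _ _⟩ hx).2

section SecondDeriv

variable {f f' f'' : ℝ → ℝ} {a c : ℝ}

theorem integral_sq_sub_mul_second_deriv (hf : ∀ x ∈ uIcc a c, HasDerivAt f (f' x) x)
    (hf' : ∀ x ∈ uIcc a c, HasDerivAt f' (f'' x) x) (hf'' : IntervalIntegrable f'' volume a c) :
    ∫ x in a..c, (x - a) ^ 2 / 2 * f'' x =
      (c - a) ^ 2 / 2 * f' c - (c - a) * f c + ∫ x in a..c, f x := by
  have hkernel : ∀ x ∈ uIcc a c, HasDerivAt (fun y => (y - a) ^ 2 / 2) (x - a) x := fun x _ => by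
    simpa using (((hasDerivAt_id x).sub_const a).pow 2).div_const 2
  have hlin : ∀ x ∈ uIcc a c, HasDerivAt (fun y => y - a) 1 x := fun x _ =>
    (hasDerivAt_id x).sub_const a
  have hf'_int : IntervalIntegrable f' volume a c :=
    ContinuousOn.intervalIntegrable fun x hx => (hf' x hx).continuousAt.continuousWithinAt
  rw [integral_mul_deriv_eq_deriv_mul hkernel hf'
    ((continuous_sub_right a).intervalIntegrable _ _) hf'',
    integral_mul_deriv_eq_deriv_mul hlin hf intervalIntegrable_const hf'_int]
  simp only [one_mul]
  ring

theorem abs_integral_sq_sub_mul_le {g : ℝ → ℝ} {K : ℝ} (hK : ∀ x ∈ uIcc a c, |g x| ≤ K) :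
    |∫ x in a..c, (x - a) ^ 2 / 2 * g x| ≤ K * |c - a| ^ 3 / 6 := by
  have hbound :
      ∀ᵐ x ∂volume.restrict (Ι a c), ‖(x - a) ^ 2 / 2 * g x‖ ≤ (x - a) ^ 2 / 2 * K := by
    refine ae_restrict_of_forall_mem measurableSet_uIoc fun x hx => ?_
    rw [Real.norm_eq_abs, abs_mul, abs_of_nonneg (by positivity)]
    exact mul_le_mul_of_nonneg_left (hK x (uIoc_subset_uIcc hx)) (by positivity)
  have hmoment : ∫ x in a..c, (x - a) ^ 2 / 2 * K = K * (c - a) ^ 3 / 6 := by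
    simp only [intervalIntegral.integral_mul_const, intervalIntegral.integral_div,
      integral_comp_sub_right fun x => x ^ 2, integral_pow]
    ring
  have hK0 : 0 ≤ K := (abs_nonneg _).trans (hK a left_mem_uIcc)
  calc |∫ x in a..c, (x - a) ^ 2 / 2 * g x|
      ≤ |∫ x in a..c, (x - a) ^ 2 / 2 * K| :=
        norm_integral_le_abs_of_norm_le hbound
          (Continuous.intervalIntegrable (by fun_prop) _ _)
    _ = K * |c - a| ^ 3 / 6 := by
        rw [hmoment, abs_div, abs_mul, abs_pow, abs_of_nonneg hK0]
        norm_num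

theorem abs_integral_sub_mul_midpoint_le {b K : ℝ} (hab : a ≤ b)
    (hf : ∀ x ∈ Icc a b, HasDerivAt f (f' x) x) (hf' : ∀ x ∈ Icc a b, HasDerivAt f' (f'' x) x)
    (hf'' : IntervalIntegrable f'' volume a b) (hK : ∀ x ∈ Icc a b, |f'' x| ≤ K) :
    |(∫ x in a..b, f x) - (b - a) * f ((a + b) / 2)| ≤ K * (b - a) ^ 3 / 24 := by
  set m := (a + b) / 2
  have ham : a ≤ m := by simp only [m]; linarith
  have hmb : m ≤ b := by simp only [m]; linarith
  have hm : m ∈ uIcc a b := Icc_subset_uIcc ⟨ham, hmb⟩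
  have hleft : uIcc a m ⊆ Icc a b := uIcc_subset_Icc (left_mem_Icc.2 hab) ⟨ham, hmb⟩
  have hright : uIcc b m ⊆ Icc a b := uIcc_subset_Icc (right_mem_Icc.2 hab) ⟨ham, hmb⟩
  have hf_int : IntervalIntegrable f volume a b :=
    ContinuousOn.intervalIntegrable_of_Icc hab fun x hx =>
      (hf x hx).continuousAt.continuousWithinAt
  have hsplit := integral_add_adjacent_intervals
    (hf_int.mono_set (uIcc_subset_uIcc_left hm))
    (hf_int.mono_set (uIcc_subset_uIcc_right hm))
  -- The `f'` terms cancel because `m` is equidistant from `a` and `b`.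
  have hpeano : (∫ x in a..b, f x) - (b - a) * f m =
      (∫ x in a..m, (x - a) ^ 2 / 2 * f'' x) - ∫ x in b..m, (x - b) ^ 2 / 2 * f'' x := by
    rw [integral_sq_sub_mul_second_deriv (fun x hx => hf x (hleft hx))
        (fun x hx => hf' x (hleft hx)) (hf''.mono_set (uIcc_subset_uIcc_left hm)),
      integral_sq_sub_mul_second_deriv (fun x hx => hf x (hright hx))
        (fun x hx => hf' x (hright hx))
        (hf''.mono_set (uIcc_subset_uIcc_right hm)).symm,
      integral_symm m b, ← hsplit]
    simp only [m]
    ring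
  have hbound : ∀ c, uIcc c m ⊆ Icc a b → |c - m| = (b - a) / 2 →
      |∫ x in c..m, (x - c) ^ 2 / 2 * f'' x| ≤ K * ((b - a) / 2) ^ 3 / 6 := fun c hc hcm => by
    rw [← hcm, abs_sub_comm]
    exact abs_integral_sq_sub_mul_le fun x hx => hK x (hc hx)
  calc |(∫ x in a..b, f x) - (b - a) * f m|
      ≤ |∫ x in a..m, (x - a) ^ 2 / 2 * f'' x| + |∫ x in b..m, (x - b) ^ 2 / 2 * f'' x| := by
        rw [hpeano]; exact abs_sub _ _
    _ ≤ K * ((b - a) / 2) ^ 3 / 6 + K * ((b - a) / 2) ^ 3 / 6 :=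
        add_le_add (hbound a hleft (by simp only [m]; rw [abs_of_nonpos] <;> linarith))
          (hbound b hright (by simp only [m]; rw [abs_of_nonneg] <;> linarith))
    _ = K * (b - a) ^ 3 / 24 := by ring

end SecondDeriv

theorem Real.two_mul_add_one_rpow_one_div_le_three {p : ℝ} (hp : 1 ≤ p) :
    (2 * p + 1) ^ (1 / p) ≤ 3 := by
  have hbernoulli : 2 * p + 1 ≤ (3 : ℝ) ^ p := by
    have := one_add_mul_self_le_rpow_one_add (s := 2) (by norm_num) hp
    norm_num at this
    linarith
  rw [one_div, Real.rpow_inv_le_iff_of_pos (by linarith) (by norm_num) (by linarith)]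
  exact hbernoulli

theorem hermite_hadamard_second_deriv_abs_pow_quasiconvex_holder_general
    (I : Set ℝ) (hI : I.OrdConnected) (f f' f'' : ℝ → ℝ) (a b : ℝ)
    (ha : a ∈ interior I) (hb : b ∈ interior I) (hab : a < b)
    (hderiv1 : ∀ x ∈ interior I, HasDerivAt f (f' x) x)
    (hderiv2 : ∀ x ∈ interior I, HasDerivAt f' (f'' x) x)
    (hint : IntervalIntegrable f'' volume a b)
    (p q : ℝ) (hp : 1 < p) (hq : 1 < q)
    (hqc : QuasiconvexOn ℝ (Set.Icc a b) (fun x => |f'' x| ^ q)) :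
    |(1 / (b - a)) * (∫ x in a..b, f x) - f ((a + b) / 2)| ≤
      (b - a) ^ 2 / (8 * (2 * p + 1) ^ (1 / p)) *
        (max (|f'' a| ^ q) (|f'' b| ^ q)) ^ (1 / q) := by
  set K := (max (|f'' a| ^ q) (|f'' b| ^ q)) ^ (1 / q)
  have hIcc : Icc a b ⊆ interior I := hI.convex.interior.ordConnected.out ha hb
  have hK : ∀ x ∈ Icc a b, |f'' x| ≤ K := fun x hx => by
    calc |f'' x| = (|f'' x| ^ q) ^ (1 / q) := by
          rw [one_div, Real.rpow_rpow_inv (abs_nonneg _) (by linarith)]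
      _ ≤ K := Real.rpow_le_rpow (by positivity) (hqc.le_max_of_mem_Icc hx) (by positivity)
  have hmid := abs_integral_sub_mul_midpoint_le hab.le (fun x hx => hderiv1 x (hIcc hx))
    (fun x hx => hderiv2 x (hIcc hx)) hint hK
  have hconst := Real.two_mul_add_one_rpow_one_div_le_three hp.le
  have hba : 0 < b - a := sub_pos.2 hab
  have hK0 : 0 ≤ K := (abs_nonneg _).trans (hK a (left_mem_Icc.2 hab.le))
  calc |(1 / (b - a)) * (∫ x in a..b, f x) - f ((a + b) / 2)|
      = |(∫ x in a..b, f x) - (b - a) * f ((a + b) / 2)| / (b - a) := by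
        rw [← abs_of_pos hba, ← abs_div, abs_of_pos hba]
        congr 1
        field_simp
    _ ≤ K * (b - a) ^ 3 / 24 / (b - a) := by gcongr
    _ = (b - a) ^ 2 / (8 * 3) * K := by field_simp; ring
    _ ≤ (b - a) ^ 2 / (8 * (2 * p + 1) ^ (1 / p)) * K := by gcongr

theorem hermite_hadamard_second_deriv_abs_pow_quasiconvex_holder
    (I : Set ℝ) (hI : I.OrdConnected) (f f' f'' : ℝ → ℝ) (a b : ℝ)
    (ha : a ∈ interior I) (hb : b ∈ interior I) (hab : a < b)
    (hderiv1 : ∀ x ∈ interior I, HasDerivAt f (f' x) x)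
    (hderiv2 : ∀ x ∈ interior I, HasDerivAt f' (f'' x) x)
    (hint : IntervalIntegrable f'' volume a b)
    (p q : ℝ) (hp : 1 < p) (hq : 1 < q) (hpq : 1 / p + 1 / q = 1)
    (hqc : QuasiconvexOn ℝ (Set.Icc a b) (fun x => |f'' x| ^ q)) :
    |(1 / (b - a)) * (∫ x in a..b, f x) - f ((a + b) / 2)| ≤
      (b - a) ^ 2 / (8 * (2 * p + 1) ^ (1 / p)) *
        (max (|f'' a| ^ q) (|f'' b| ^ q)) ^ (1 / q) :=
  hermite_hadamard_second_deriv_abs_pow_quasiconvex_holder_general I hI f f' f'' a b ha hb hab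
    hderiv1 hderiv2 hint p q hp hq hqc
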